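/- arXiv:2603.13885 — 3 statements merged into one kernel-verified Lean document; each statement's English description precedes it below -/
import Mathlib

section
/- Let d_1, …, d_N > 0 and κ_1, …, κ_N > 0 be real numbers with ∑_{ν=1}^N d_ν κ_ν = 1, and let q_1, …, q_N > 0. Define α_n = ∏_{ν=1}^N (n_ν / (q_ν κ_ν^{d_ν}))^{κ_ν} for an N-tuple n = (n_1,…,n_N) of positive integers. If α_m = α_{m'} and, for every 1 ≤ ν ≤ N−1, m_ν^{1} m_N^{−d_ν/d_N} = m'_ν m'_N^{−d_ν/d_N} (as positive reals), then m = m'. -/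
theorem stmt_6 (N : ℕ) (d κ q : Fin (N + 1) → ℝ)
    (hd : ∀ ν, 0 < d ν) (hκ : ∀ ν, 0 < κ ν) (hq : ∀ ν, 0 < q ν)
    (hsum : ∑ ν, d ν * κ ν = 1)
    (m m' : Fin (N + 1) → ℕ) (hm : ∀ ν, 1 ≤ m ν) (hm' : ∀ ν, 1 ≤ m' ν)
    (h1 : ∏ ν, ((m ν : ℝ) / (q ν * κ ν ^ (d ν))) ^ (κ ν) =
          ∏ ν, ((m' ν : ℝ) / (q ν * κ ν ^ (d ν))) ^ (κ ν))
    (h2 : ∀ ν : Fin (N + 1), ν ≠ Fin.last N →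
      (m ν : ℝ) * (m (Fin.last N) : ℝ) ^ (-(d ν / d (Fin.last N))) =
        (m' ν : ℝ) * (m' (Fin.last N) : ℝ) ^ (-(d ν / d (Fin.last N)))) :
    m = m' := by
  set L := Fin.last N with hLdef
  have hmpos : ∀ ν, (0:ℝ) < m ν := fun ν => by exact_mod_cast hm ν
  have hm'pos : ∀ ν, (0:ℝ) < m' ν := fun ν => by exact_mod_cast hm' ν
  set f : Fin (N+1) → ℝ := fun ν => Real.log (m ν) - Real.log (m' ν) with hf
  have hdL := hd L
  have key : ∀ ν, f ν = (d ν / d L) * f L := by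
    intro ν
    by_cases hν : ν = L
    · subst hν; field_simp
    · have heq := h2 ν hν
      have hlog := congrArg Real.log heq
      rw [Real.log_mul (ne_of_gt (hmpos ν)) (Real.rpow_pos_of_pos (hmpos L) _).ne',
        Real.log_mul (ne_of_gt (hm'pos ν)) (Real.rpow_pos_of_pos (hm'pos L) _).ne',
        Real.log_rpow (hmpos L), Real.log_rpow (hm'pos L)] at hlog
      simp only [hf]
      have : Real.log (m ν) - Real.log (m' ν)
          = (d ν / d L) * (Real.log (m L) - Real.log (m' L)) := by
        ring_nf
        ring_nf at hlog
        linarith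
      simpa using this
  have hsum0 : ∑ ν, κ ν * f ν = 0 := by
    have hlog := congrArg Real.log h1
    have hden : ∀ ν, (0:ℝ) < q ν * κ ν ^ d ν :=
      fun ν => mul_pos (hq ν) (Real.rpow_pos_of_pos (hκ ν) _)
    rw [Real.log_prod (fun ν _ =>
        (Real.rpow_pos_of_pos (div_pos (hmpos ν) (hden ν)) _).ne'),
      Real.log_prod (fun ν _ =>
        (Real.rpow_pos_of_pos (div_pos (hm'pos ν) (hden ν)) _).ne')] at hlog
    have e1 : ∀ m'' : Fin (N+1) → ℕ, (∀ ν, (0:ℝ) < m'' ν) →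
        ∀ ν : Fin (N+1),
        Real.log (((m'' ν : ℝ) / (q ν * κ ν ^ (d ν))) ^ (κ ν))
          = κ ν * Real.log (m'' ν) - κ ν * Real.log (q ν * κ ν ^ d ν) := by
      intro m'' hp ν
      rw [Real.log_rpow (div_pos (hp ν) (hden ν)), Real.log_div (ne_of_gt (hp ν)) (hden ν).ne']
      ring
    simp only [e1 m hmpos, e1 m' hm'pos, Finset.sum_sub_distrib] at hlog
    have : ∑ ν, κ ν * Real.log (m ν) = ∑ ν, κ ν * Real.log (m' ν) := by linarith
    simp only [hf, mul_sub, Finset.sum_sub_distrib, this, sub_self]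
  have hfL : f L = 0 := by
    have : ∑ ν, κ ν * f ν = (f L / d L) * ∑ ν, d ν * κ ν := by
      rw [Finset.mul_sum]
      refine Finset.sum_congr rfl fun ν _ => ?_
      rw [key ν]; field_simp
    rw [hsum, mul_one] at this
    rw [hsum0] at this
    have := this.symm
    field_simp at this
    simpa using this
  have hf0 : ∀ ν, f ν = 0 := fun ν => by rw [key ν, hfL, mul_zero]
  funext ν
  have : Real.log (m ν) = Real.log (m' ν) := by
    have := hf0 ν; simp only [hf] at this; linarith
  have hcast : (m ν : ℝ) = (m' ν : ℝ) := by
    have := congrArg Real.exp this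
    rwa [Real.exp_log (hmpos ν), Real.exp_log (hm'pos ν)] at this
  exact_mod_cast hcast
end

section
/- Fix A, b ∈ C with A ≠ 0 and an integer M ≥ 1. Then there exist linear forms R_m(X_1,…,X_m) and R̃_m(X_1,…,X_{m−1}) for 1 ≤ m ≤ M satisfying R_m(X_1,…,X_m) = (−1)^m A^m X_m + R̃_m(X_1,…,X_{m−1}), and a polynomial Q_M(X_1,…,X_M,T) of degree ≤ 1 in each X_j and degree ≤ M−1 in T, such that for all complex X_1,…,X_M and all T with T ≠ 0 and (AT+b)_M ≠ 0, ∑_{k=1}^M X_k / T^k = ∑_{m=1}^M (−1)^m R_m(X_1,…,X_m) / (AT+b)_m + Q_M(X_1,…,X_M,T) / (T^M (AT+b)_M). -/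
/-- The Pochhammer symbol `(z)_m = z (z+1) ⋯ (z+m-1)` for complex `z`. -/
noncomputable def poch (z : ℂ) (m : ℕ) : ℂ := ∏ i ∈ Finset.range m, (z + i)

open Polynomial Finset

noncomputable def lf (A b : ℂ) (i : ℕ) : Polynomial ℂ := C A * X + C (b + i)

noncomputable def ppoch (A b : ℂ) (M : ℕ) : Polynomial ℂ := ∏ i ∈ range M, lf A b i

noncomputable def Dp (A b : ℂ) (M m : ℕ) : Polynomial ℂ :=
  X ^ M * ∏ i ∈ Finset.Ico (m+1) M, lf A b i

variable {A b : ℂ}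

lemma lf_eval (i : ℕ) (T : ℂ) : (lf A b i).eval T = A * T + b + i := by
  simp [lf]; ring

lemma ppoch_eval (M : ℕ) (T : ℂ) : (ppoch A b M).eval T = poch (A * T + b) M := by
  simp [ppoch, poch, eval_prod, lf_eval]

lemma poch_factor {M m : ℕ} (hm : m < M) (z : ℂ) :
    poch z M = poch z (m+1) * ∏ i ∈ Finset.Ico (m+1) M, (z + i) := by
  unfold poch
  rw [range_eq_Ico, range_eq_Ico]
  exact (Finset.prod_Ico_consecutive (fun i : ℕ => z + (i:ℂ)) (Nat.zero_le _) hm).symm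

lemma lf_natDegree (hA : A ≠ 0) (i : ℕ) : (lf A b i).natDegree = 1 :=
  natDegree_linear hA

lemma lf_ne_zero (hA : A ≠ 0) (i : ℕ) : lf A b i ≠ 0 := fun h => by
  have := natDegree_linear (b := b + i) hA
  rw [show C A * X + C (b + (i:ℂ)) = lf A b i from rfl, h] at this
  simp at this

lemma ppoch_natDegree (hA : A ≠ 0) (M : ℕ) : (ppoch A b M).natDegree = M := by
  rw [ppoch, natDegree_prod _ _ (fun i _ => lf_ne_zero hA i)]
  simp [lf_natDegree hA]

lemma ppoch_leadingCoeff (hA : A ≠ 0) (M : ℕ) : (ppoch A b M).leadingCoeff = A ^ M := by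
  rw [ppoch, leadingCoeff_prod]
  have h : ∀ i : ℕ, (lf A b i).leadingCoeff = A := fun i => leadingCoeff_linear hA
  simp [h]

lemma ppoch_ne_zero (hA : A ≠ 0) (M : ℕ) : ppoch A b M ≠ 0 :=
  prod_ne_zero_iff.2 fun i _ => lf_ne_zero hA i

lemma Dp_natDegree (hA : A ≠ 0) {M m : ℕ} (hm : m < M) :
    (Dp A b M m).natDegree = M + (M - 1 - m) := by
  rw [Dp, natDegree_mul (pow_ne_zero _ X_ne_zero) (prod_ne_zero_iff.2 fun i _ => lf_ne_zero hA i),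
    natDegree_prod _ _ (fun i _ => lf_ne_zero hA i)]
  simp [lf_natDegree hA, Nat.card_Ico]
  omega

lemma Dp_coeff_top (hA : A ≠ 0) {M m : ℕ} (hm : m < M) :
    (Dp A b M m).coeff (M + (M - 1 - m)) = A ^ (M - 1 - m) := by
  have h1 : (Dp A b M m).coeff (M + (M - 1 - m)) =
      (∏ i ∈ Finset.Ico (m+1) M, lf A b i).coeff (M - 1 - m) := by
    rw [Dp, show M + (M - 1 - m) = (M - 1 - m) + M by omega, coeff_X_pow_mul]
  rw [h1]
  have hnd : (∏ i ∈ Finset.Ico (m+1) M, lf A b i).natDegree = M - 1 - m := by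
    rw [natDegree_prod _ _ (fun i _ => lf_ne_zero hA i)]
    simp [lf_natDegree hA, Nat.card_Ico]; omega
  have := leadingCoeff_prod (Finset.Ico (m+1) M) (fun i => lf A b i)
  rw [leadingCoeff, hnd] at this
  rw [this]
  simp only [leadingCoeff_linear hA, lf]
  rw [Finset.prod_const, Nat.card_Ico]
  congr 1; omega

lemma Dp_coeff_above (hA : A ≠ 0) {M m n : ℕ} (hm : m < M) (hn : M + (M - 1 - m) < n) :
    (Dp A b M m).coeff n = 0 :=
  coeff_eq_zero_of_natDegree_lt (by rw [Dp_natDegree hA hm]; exact hn)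

lemma key (hA : A ≠ 0) (M : ℕ) :
    ∀ j, j < M → ∀ G : Polynomial ℂ, G.degree < ((M + j + 1 : ℕ) : WithBot ℕ) →
    ∃ r : ℕ → ℂ, (∀ m, m < M - 1 - j → r m = 0) ∧
      r (M - 1 - j) = G.coeff (M + j) / A ^ j ∧
      (G - ∑ m ∈ range M, C (r m) * Dp A b M m).degree < (M : WithBot ℕ) := by
  intro j
  induction j with
  | zero =>
    intro hj G hG
    refine ⟨fun m => if m = M - 1 then G.coeff M else 0, ?_, ?_, ?_⟩
    · intro m hm; simp only [if_neg (by omega : ¬ m = M - 1)]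
    · simp
    · have hsum : ∑ m ∈ range M, C (if m = M - 1 then G.coeff M else 0) * Dp A b M m
          = C (G.coeff M) * X ^ M := by
        rw [Finset.sum_eq_single (M - 1)]
        · rw [if_pos rfl]
          congr 1
          rw [Dp, show M - 1 + 1 = M by omega]
          simp
        · intro m _ hm; rw [if_neg hm]; simp
        · intro h; exact absurd (Finset.mem_range.2 (by omega)) h
      rw [hsum, degree_lt_iff_coeff_zero]
      intro n hn
      rcases eq_or_lt_of_le hn with h | h
      · simp [← h]
      · rw [coeff_sub, coeff_C_mul, coeff_X_pow, if_neg (by omega : ¬ n = M),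
          (degree_lt_iff_coeff_zero G (M + 0 + 1)).1 hG n (by omega)]
        ring
  | succ j ih =>
    intro hj G hG
    set m0 := M - 1 - (j + 1) with hm0
    have hm0M : m0 < M := by omega
    have hm0top : M - 1 - m0 = j + 1 := by omega
    set c := G.coeff (M + (j + 1)) / A ^ (j + 1) with hc
    set G' := G - C c * Dp A b M m0 with hG'
    have hG'deg : G'.degree < ((M + j + 1 : ℕ) : WithBot ℕ) := by
      rw [degree_lt_iff_coeff_zero]
      intro n hn
      rcases eq_or_lt_of_le hn with h | h
      · rw [hG', coeff_sub, coeff_C_mul, ← h]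
        rw [show M + j + 1 = M + (M - 1 - m0) by omega, Dp_coeff_top hA hm0M]
        rw [hc, show M + (M - 1 - m0) = M + (j+1) by omega, hm0top]
        field_simp
        ring
      · rw [hG', coeff_sub, coeff_C_mul,
          (degree_lt_iff_coeff_zero G (M + (j+1) + 1)).1 hG n (by omega),
          Dp_coeff_above hA hm0M (by omega)]
        ring
    obtain ⟨r', h1', h2', h3'⟩ := ih (by omega) G' hG'deg
    have hr'm0 : r' m0 = 0 := h1' m0 (by omega)
    refine ⟨fun m => if m = m0 then c else r' m, ?_, ?_, ?_⟩
    · intro m hm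
      show (if m = m0 then c else r' m) = 0
      rw [if_neg (by omega : ¬ m = m0)]
      exact h1' m (by omega)
    · show (if m0 = m0 then c else r' m0) = c
      rw [if_pos rfl]
    · have hmem : m0 ∈ range M := Finset.mem_range.2 hm0M
      have hsum : ∑ m ∈ range M, C (if m = m0 then c else r' m) * Dp A b M m
          = (∑ m ∈ range M, C (r' m) * Dp A b M m) + C c * Dp A b M m0 := by
        rw [← Finset.sum_erase_add _ _ hmem, ← Finset.sum_erase_add _ (fun m => C (r' m) * Dp A b M m) hmem]
        rw [if_pos rfl, hr'm0]
        simp only [map_zero, zero_mul, add_zero]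
        congr 1
        refine Finset.sum_congr rfl fun m hm => ?_
        rw [if_neg (Finset.ne_of_mem_erase hm)]
      rw [hsum]
      have : G - ((∑ m ∈ range M, C (r' m) * Dp A b M m) + C c * Dp A b M m0)
          = G' - ∑ m ∈ range M, C (r' m) * Dp A b M m := by
        rw [hG']; ring
      rw [this]
      exact h3'

lemma perk (hA : A ≠ 0) {M k : ℕ} (hk : k < M) :
    ∃ r : ℕ → ℂ, (∀ m, m < k → r m = 0) ∧ r k = A ^ (k + 1) ∧
      ∃ H : Polynomial ℂ, H.natDegree < M ∧
        ∀ T : ℂ, T ≠ 0 → poch (A * T + b) M ≠ 0 →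
          1 / T ^ (k + 1) =
            (∑ m ∈ range M, r m / poch (A * T + b) (m + 1)) +
              H.eval T / (T ^ M * poch (A * T + b) M) := by
  have hM : 1 ≤ M := by omega
  set j := M - 1 - k with hj
  set G : Polynomial ℂ := X ^ (M - 1 - k) * ppoch A b M with hGdef
  have hGdeg : G.degree < ((M + j + 1 : ℕ) : WithBot ℕ) := by
    have h1 : G.natDegree = (M - 1 - k) + M := by
      rw [hGdef, natDegree_mul (pow_ne_zero _ X_ne_zero) (ppoch_ne_zero hA M),
        natDegree_X_pow, ppoch_natDegree hA]
    calc G.degree ≤ (G.natDegree : WithBot ℕ) := degree_le_natDegree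
      _ < ((M + j + 1 : ℕ) : WithBot ℕ) := by
          rw [h1]; exact_mod_cast (by omega : (M - 1 - k) + M < M + j + 1)
  obtain ⟨r, hr1, hr2, hr3⟩ := key hA M j (by omega) G hGdeg
  refine ⟨r, ?_, ?_, ?_⟩
  · intro m hm; exact hr1 m (by omega)
  · rw [show k = M - 1 - j by omega, hr2]
    have hcoeff : G.coeff (M + j) = A ^ M := by
      rw [hGdef, show M + j = M + (M - 1 - k) by omega, coeff_X_pow_mul]
      have := ppoch_leadingCoeff hA (b := b) M
      rwa [leadingCoeff, ppoch_natDegree hA] at this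
    rw [hcoeff, show M = (k + 1) + (M - 1 - k) by omega, pow_add,
      mul_div_cancel_right₀ _ (pow_ne_zero _ hA)]
    congr 1; omega
  · set H := G - ∑ m ∈ range M, C (r m) * Dp A b M m with hH
    have hHnd : H.natDegree < M := by
      rcases eq_or_ne H 0 with h | h
      · rw [h]; simpa using Nat.lt_of_lt_of_le Nat.zero_lt_one hM
      · exact (natDegree_lt_iff_degree_lt h).2 hr3
    refine ⟨H, hHnd, ?_⟩
    intro T hT hP
    have hevalD : ∀ m, (Dp A b M m).eval T = T ^ M * ∏ i ∈ Finset.Ico (m+1) M, (A * T + b + i) := by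
      intro m
      rw [Dp, eval_mul, eval_pow, eval_X, eval_prod]
      congr 1
      exact Finset.prod_congr rfl fun i _ => lf_eval i T
    have hmain : T ^ (M - 1 - k) * poch (A * T + b) M =
        (∑ m ∈ range M, r m * (T ^ M * ∏ i ∈ Finset.Ico (m+1) M, (A * T + b + i))) + H.eval T := by
      have e1 : H.eval T = T ^ (M - 1 - k) * poch (A * T + b) M -
          ∑ m ∈ range M, r m * (T ^ M * ∏ i ∈ Finset.Ico (m+1) M, (A * T + b + i)) := by
        rw [hH, eval_sub, eval_mul, eval_pow, eval_X, ppoch_eval, eval_finset_sum]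
        congr 1
        exact Finset.sum_congr rfl fun m _ => by rw [eval_mul, eval_C, hevalD]
      linear_combination -e1
    have hterm : ∀ m ∈ range M, r m / poch (A * T + b) (m + 1) =
        r m * (T ^ M * ∏ i ∈ Finset.Ico (m+1) M, (A * T + b + i)) /
          (T ^ M * poch (A * T + b) M) := by
      intro m hm
      have hmM : m < M := Finset.mem_range.1 hm
      have hfact := poch_factor hmM (A * T + b)
      have hp1 : poch (A * T + b) (m + 1) ≠ 0 := by
        intro h0; apply hP; rw [hfact, h0, zero_mul]
      rw [div_eq_div_iff hp1 (mul_ne_zero (pow_ne_zero _ hT) hP)]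
      rw [hfact]; ring
    rw [Finset.sum_congr rfl hterm, ← Finset.sum_div, ← add_div, ← hmain]
    rw [div_eq_div_iff (pow_ne_zero _ hT) (mul_ne_zero (pow_ne_zero _ hT) hP)]
    have hpow : T ^ M = T ^ (k + 1) * T ^ (M - 1 - k) := by
      rw [← pow_add]; congr 1; omega
    rw [hpow]; ring


theorem stmt_7 (A b : ℂ) (hA : A ≠ 0) (M : ℕ) (hM : 1 ≤ M) :
    -- `R m i` is the coefficient of `X_{i+1}` in the linear form `R_{m+1}` (indices shifted
    -- by one: `m : Fin M` represents the index `m+1 ∈ {1,…,M}`).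
    ∃ R : Fin M → Fin M → ℂ,
      -- `R_m` is a linear form in `X_1,…,X_m`:
      (∀ m i : Fin M, m < i → R m i = 0) ∧
      -- `R_m(X) = (-1)^m A^m X_m + R̃_m(X_1,…,X_{m-1})`:
      (∀ m : Fin M, R m m = (-1) ^ ((m : ℕ) + 1) * A ^ ((m : ℕ) + 1)) ∧
      -- `Q_M`, of degree ≤ 1 in each `X_j` and degree ≤ M-1 in `T`, is given by its
      -- coefficients `q ε t` of the monomial `(∏_{ε j} X_j) · T^t`:
      ∃ q : (Fin M → Bool) → Fin M → ℂ,
        ∀ (X : Fin M → ℂ) (T : ℂ), T ≠ 0 → poch (A * T + b) M ≠ 0 →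
          ∑ k : Fin M, X k / T ^ ((k : ℕ) + 1) =
            (∑ m : Fin M, (-1) ^ ((m : ℕ) + 1) * (∑ i, R m i * X i) /
              poch (A * T + b) ((m : ℕ) + 1)) +
            (∑ ε : Fin M → Bool, ∑ t : Fin M,
                q ε t * (∏ j, if ε j then X j else 1) * T ^ (t : ℕ)) /
              (T ^ M * poch (A * T + b) M) := by

  have hperk := fun k : Fin M => perk (b := b) hA k.2
  choose r hr0 hrk H hHnd hHeval using hperk
  refine ⟨fun m i => (-1) ^ ((m : ℕ) + 1) * r i (m : ℕ), ?_, ?_, ?_⟩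
  · intro m i hmi
    show (-1 : ℂ) ^ ((m : ℕ) + 1) * r i (m : ℕ) = 0
    rw [hr0 i (m : ℕ) hmi, mul_zero]
  · intro m
    show (-1 : ℂ) ^ ((m : ℕ) + 1) * r m (m : ℕ) = (-1) ^ ((m : ℕ) + 1) * A ^ ((m : ℕ) + 1)
    rw [hrk m]
  · refine ⟨fun ε t => ∑ k : Fin M,
      if ε = (fun j => decide (j = k)) then (H k).coeff (t : ℕ) else 0, ?_⟩
    intro X T hT hP
    have hsign : ∀ n : ℕ, ((-1 : ℂ)) ^ n * (-1) ^ n = 1 := fun n => by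
      rw [← mul_pow]; norm_num
    have hmid : (∑ m : Fin M, (-1) ^ ((m : ℕ) + 1) *
          (∑ i, ((-1 : ℂ) ^ ((m : ℕ) + 1) * r i (m : ℕ)) * X i) /
            poch (A * T + b) ((m : ℕ) + 1))
        = ∑ k : Fin M, X k * ∑ m ∈ Finset.range M, r k m / poch (A * T + b) (m + 1) := by
      have h1 : ∀ m : Fin M, (-1 : ℂ) ^ ((m : ℕ) + 1) *
          (∑ i, ((-1 : ℂ) ^ ((m : ℕ) + 1) * r i (m : ℕ)) * X i) = ∑ i, r i (m : ℕ) * X i := by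
        intro m
        rw [Finset.mul_sum]
        exact Finset.sum_congr rfl fun i _ => by
          linear_combination (r i (m : ℕ) * X i) * hsign ((m : ℕ) + 1)
      have h2 : ∀ m : Fin M, (-1 : ℂ) ^ ((m : ℕ) + 1) *
            (∑ i, ((-1 : ℂ) ^ ((m : ℕ) + 1) * r i (m : ℕ)) * X i) /
              poch (A * T + b) ((m : ℕ) + 1)
          = ∑ i : Fin M, X i * (r i (m : ℕ) / poch (A * T + b) ((m : ℕ) + 1)) := by
        intro m
        rw [h1 m, Finset.sum_div]
        exact Finset.sum_congr rfl fun i _ => by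
          rw [mul_comm (r i (m : ℕ)) (X i), mul_div_assoc]
      rw [Finset.sum_congr rfl fun m _ => h2 m, Finset.sum_comm]
      refine Finset.sum_congr rfl fun i _ => ?_
      rw [← Finset.mul_sum,
        Fin.sum_univ_eq_sum_range (fun m => r i m / poch (A * T + b) (m + 1)) M]
    have hprodk : ∀ k : Fin M,
        (∏ j, if (fun j => decide (j = k)) j then X j else 1) = X k := by
      intro k
      simp only [decide_eq_true_eq]
      rw [Finset.prod_ite_eq' Finset.univ k X]
      simp
    have hnum : (∑ ε : Fin M → Bool, ∑ t : Fin M,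
          (∑ k : Fin M, if ε = (fun j => decide (j = k)) then (H k).coeff (t : ℕ) else 0) *
            (∏ j, if ε j then X j else 1) * T ^ (t : ℕ))
        = ∑ k : Fin M, X k * (H k).eval T := by
      have h2 : ∀ (ε : Fin M → Bool) (t : Fin M),
          (∑ k : Fin M, if ε = (fun j => decide (j = k)) then (H k).coeff (t : ℕ) else 0) *
            (∏ j, if ε j then X j else 1) * T ^ (t : ℕ)
          = ∑ k : Fin M, if ε = (fun j => decide (j = k)) then
              (H k).coeff (t : ℕ) * (∏ j, if ε j then X j else 1) * T ^ (t : ℕ) else 0 := by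
        intro ε t
        rw [Finset.sum_mul, Finset.sum_mul]
        exact Finset.sum_congr rfl fun k _ => by split <;> simp
      rw [Finset.sum_congr rfl fun ε _ => Finset.sum_congr rfl fun t _ => h2 ε t]
      rw [Finset.sum_congr rfl fun ε (_ : ε ∈ Finset.univ) => Finset.sum_comm, Finset.sum_comm]
      refine Finset.sum_congr rfl fun k _ => ?_
      rw [Finset.sum_comm]
      have h3 : ∀ t : Fin M, (∑ ε : Fin M → Bool,
            if ε = (fun j => decide (j = k)) then
              (H k).coeff (t : ℕ) * (∏ j, if ε j then X j else 1) * T ^ (t : ℕ) else 0)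
          = (H k).coeff (t : ℕ) * X k * T ^ (t : ℕ) := by
        intro t
        rw [Finset.sum_ite_eq' Finset.univ (fun j => decide (j = k))
          (fun ε => (H k).coeff (t : ℕ) * (∏ j, if ε j then X j else 1) * T ^ (t : ℕ))]
        simp only [Finset.mem_univ, if_true]
        rw [hprodk k]
      rw [Finset.sum_congr rfl fun t _ => h3 t]
      rw [Polynomial.eval_eq_sum_range' (hHnd k) T, Finset.mul_sum,
        ← Fin.sum_univ_eq_sum_range (fun t => X k * ((H k).coeff t * T ^ t)) M]
      exact Finset.sum_congr rfl fun t _ => by ring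
    rw [hmid, hnum, Finset.sum_div, ← Finset.sum_add_distrib]
    refine Finset.sum_congr rfl fun k _ => ?_
    have h := hHeval k T hT hP
    field_simp at h ⊢
    linear_combination (X k) * h
end

section
/- Let N ≥ 2, λ_1, …, λ_N > 0 with ∑_ν λ_ν = 1, a_1,…,a_N ∈ C, a = ∑_ν a_ν, and let Q_j be as in the previous context. For k ≥ 1 define V_k(a_1,…,a_N) = ∑_{m=1}^k (1/m!) ∑_{j_1+…+j_m=k, j_i≥1} ∏_{p=1}^m Q_{j_p}(a_1,…,a_N). Then V_k is a polynomial of total degree ≤ 2k in a_1,…,a_N, and V_k ≡ (1/(2^k k!)) ( a^2 − ∑_{ν=1}^N a_ν^2/λ_ν )^k modulo polynomials of total degree ≤ 2k−1. -/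
open MvPolynomial

lemma bern_natDegree (n : ℕ) : (Polynomial.bernoulli n).natDegree ≤ n := by
  unfold Polynomial.bernoulli
  refine (Polynomial.natDegree_sum_le _ _).trans ?_
  refine (Finset.fold_max_le _).mpr ⟨Nat.zero_le _, fun i hi => ?_⟩
  exact (Polynomial.natDegree_monomial_le _).trans (Nat.sub_le _ _)

lemma td_aeval {σ : Type*} {q : MvPolynomial σ ℂ} {d : ℕ} (hq : q.totalDegree ≤ d)
    (P : Polynomial ℚ) :
    ((Polynomial.aeval q) P).totalDegree ≤ P.natDegree * d := by
  rw [Polynomial.aeval_eq_sum_range]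
  refine totalDegree_finsetSum_le fun i hi => ?_
  refine (totalDegree_smul_le _ _).trans ?_
  refine (totalDegree_pow _ _).trans ?_
  have : i ≤ P.natDegree := Nat.lt_succ_iff.mp (Finset.mem_range.mp hi)
  exact Nat.mul_le_mul this hq

lemma td_S {N : ℕ} : (∑ ν, (X ν : MvPolynomial (Fin N) ℂ)).totalDegree ≤ 1 :=
  totalDegree_finsetSum_le fun ν _ => le_of_eq (totalDegree_X ν)

/-- The polynomial `Q_j(a_1,…,a_N) = (1/(j(j+1))) [B_{j+1}(a-(N-1)/2) - ∑_ν B_{j+1}(a_ν)/λ_ν^j]`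
where `a = a_1 + ⋯ + a_N` and `B_n` is the `n`-th Bernoulli polynomial. -/
noncomputable def Qpoly (N : ℕ) (lam : Fin N → ℝ) (j : ℕ) : MvPolynomial (Fin N) ℂ :=
  MvPolynomial.C (((j : ℂ) * ((j : ℂ) + 1))⁻¹) *
    ((Polynomial.aeval ((∑ ν, (X ν : MvPolynomial (Fin N) ℂ)) -
        MvPolynomial.C (((N : ℂ) - 1) / 2))) (Polynomial.bernoulli (j + 1)) -
      ∑ ν, MvPolynomial.C (((lam ν : ℂ) ^ j)⁻¹) *
        (Polynomial.aeval (X ν : MvPolynomial (Fin N) ℂ)) (Polynomial.bernoulli (j + 1)))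

lemma td_Q (N : ℕ) (lam : Fin N → ℝ) (j : ℕ) : (Qpoly N lam j).totalDegree ≤ j + 1 := by
  unfold Qpoly
  refine (totalDegree_mul _ _).trans ?_
  rw [totalDegree_C, zero_add]
  refine (totalDegree_sub _ _).trans (max_le ?_ ?_)
  · have h1 : ((∑ ν, (X ν : MvPolynomial (Fin N) ℂ)) -
        MvPolynomial.C (((N : ℂ) - 1) / 2)).totalDegree ≤ 1 :=
      (totalDegree_sub _ _).trans (max_le td_S (by simp))
    calc ((Polynomial.aeval ((∑ ν, (X ν : MvPolynomial (Fin N) ℂ)) -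
            MvPolynomial.C (((N : ℂ) - 1) / 2))) (Polynomial.bernoulli (j+1))).totalDegree
        ≤ (Polynomial.bernoulli (j+1)).natDegree * 1 := td_aeval h1 _
      _ ≤ (j+1) * 1 := Nat.mul_le_mul_right _ (bern_natDegree _)
      _ = j + 1 := mul_one _
  · refine totalDegree_finsetSum_le fun ν _ => ?_
    refine (totalDegree_mul _ _).trans ?_
    rw [totalDegree_C, zero_add]
    calc ((Polynomial.aeval (X ν : MvPolynomial (Fin N) ℂ)) (Polynomial.bernoulli (j+1))).totalDegree
        ≤ (Polynomial.bernoulli (j+1)).natDegree * 1 :=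
          td_aeval (le_of_eq (totalDegree_X ν)) _
      _ ≤ (j+1) * 1 := Nat.mul_le_mul_right _ (bern_natDegree _)
      _ = j + 1 := mul_one _

lemma aeval_bern2 {σ : Type*} (q : MvPolynomial σ ℂ) :
    (Polynomial.aeval q) (Polynomial.bernoulli 2) = q^2 - q + MvPolynomial.C ((6:ℂ))⁻¹ := by
  have h2 : _root_.bernoulli 2 = 1/6 := by
    rw [show (2:ℕ) = 1 + 1 from rfl, bernoulli_eq_bernoulli'_of_ne_one (by norm_num), bernoulli'_two]
  simp [Polynomial.bernoulli, Finset.sum_range_succ, bernoulli_zero, bernoulli_one, h2,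
    Polynomial.aeval_monomial, algebraMap_eq]
  ring

lemma Q1_eq (N : ℕ) (lam : Fin N → ℝ) : Qpoly N lam 1 =
    C (2⁻¹:ℂ) * ((((∑ ν, X ν) - C (((N:ℂ)-1)/2))^2 - ((∑ ν, X ν) - C (((N:ℂ)-1)/2)) + C (6:ℂ)⁻¹)
      - ∑ ν, C ((lam ν:ℂ))⁻¹ * ((X ν)^2 - X ν + C (6:ℂ)⁻¹)) := by
  unfold Qpoly
  norm_num [aeval_bern2]

lemma td_Q1_sub (N : ℕ) (lam : Fin N → ℝ) :
    (Qpoly N lam 1 - C (2⁻¹:ℂ) * ((∑ ν, (X ν : MvPolynomial (Fin N) ℂ))^2 -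
      ∑ ν, C ((lam ν:ℂ))⁻¹ * X ν^2)).totalDegree ≤ 1 := by
  have heq : Qpoly N lam 1 - C (2⁻¹:ℂ) * ((∑ ν, (X ν : MvPolynomial (Fin N) ℂ))^2 -
      ∑ ν, C ((lam ν:ℂ))⁻¹ * X ν^2) =
      C (2⁻¹:ℂ) * ((C (((N:ℂ)-1)/2))^2 + C (((N:ℂ)-1)/2) + C (6:ℂ)⁻¹
        - (2 * C (((N:ℂ)-1)/2) + 1) * (∑ ν, X ν)
        + ∑ ν, C ((lam ν:ℂ))⁻¹ * (X ν - C (6:ℂ)⁻¹)) := by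
    rw [Q1_eq]
    simp only [mul_sub, mul_add, Finset.sum_sub_distrib, Finset.sum_add_distrib]
    ring
  rw [heq]
  refine (totalDegree_mul _ _).trans ?_
  rw [totalDegree_C, zero_add]
  refine (totalDegree_add _ _).trans (max_le ?_ ?_)
  · have hconst : ((C (((N:ℂ)-1)/2))^2 + C (((N:ℂ)-1)/2) + C (6:ℂ)⁻¹ : MvPolynomial (Fin N) ℂ)
        = C ((((N:ℂ)-1)/2)^2 + (((N:ℂ)-1)/2) + (6:ℂ)⁻¹) := by rw [map_add, map_add, map_pow]
    refine (totalDegree_sub _ _).trans (max_le (by rw [hconst, totalDegree_C]; omega) ?_)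
    refine (totalDegree_mul _ _).trans ?_
    have h2 : ((2 * C (((N:ℂ)-1)/2) + 1 : MvPolynomial (Fin N) ℂ)) = C (2*(((N:ℂ)-1)/2)+1) := by
      rw [map_add, map_mul, map_one, map_ofNat]
    rw [h2, totalDegree_C, zero_add]
    exact td_S
  · refine totalDegree_finsetSum_le fun ν _ => ?_
    refine (totalDegree_mul _ _).trans ?_
    rw [totalDegree_C, zero_add]
    exact (totalDegree_sub _ _).trans (max_le (le_of_eq (totalDegree_X ν)) (by simp))

lemma anti_filter (k : ℕ) :
    (Finset.Nat.antidiagonalTuple k k).filter (fun jj => ∀ p, 1 ≤ jj p)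
      = {fun _ => 1} := by
  ext jj
  simp only [Finset.mem_filter, Finset.Nat.mem_antidiagonalTuple, Finset.mem_singleton]
  constructor
  · rintro ⟨hs, hge⟩
    funext p
    by_contra h
    have h2 : 2 ≤ jj p := by
      have := hge p; omega
    have hlt : (k:ℕ) < ∑ i, jj i := by
      calc k = ∑ _i : Fin k, 1 := by simp
        _ < ∑ i, jj i :=
          Finset.sum_lt_sum (fun i _ => hge i) ⟨p, Finset.mem_univ _, by omega⟩
    omega
  · rintro rfl
    exact ⟨by simp, fun p => le_refl 1⟩

/-- `V_k = ∑_{m=1}^k (1/m!) ∑_{j_1+⋯+j_m=k, j_i ≥ 1} ∏_p Q_{j_p}`. -/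
noncomputable def Vpoly (N : ℕ) (lam : Fin N → ℝ) (k : ℕ) : MvPolynomial (Fin N) ℂ :=
  ∑ m ∈ Finset.Icc 1 k, MvPolynomial.C ((Nat.factorial m : ℂ))⁻¹ *
    ∑ jj ∈ (Finset.Nat.antidiagonalTuple m k).filter (fun jj => ∀ p, 1 ≤ jj p),
      ∏ p, Qpoly N lam (jj p)

lemma td_term (N : ℕ) (lam : Fin N → ℝ) (k m : ℕ) :
    (MvPolynomial.C ((Nat.factorial m : ℂ))⁻¹ *
      ∑ jj ∈ (Finset.Nat.antidiagonalTuple m k).filter (fun jj : Fin m → ℕ => ∀ p, 1 ≤ jj p),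
        ∏ p, Qpoly N lam (jj p)).totalDegree ≤ k + m := by
  refine (totalDegree_mul _ _).trans ?_
  rw [totalDegree_C, zero_add]
  refine totalDegree_finsetSum_le fun jj hjj => ?_
  obtain ⟨hjj, -⟩ := Finset.mem_filter.mp hjj
  have hsum : ∑ p, jj p = k := Finset.Nat.mem_antidiagonalTuple.mp hjj
  refine (totalDegree_finset_prod _ _).trans ?_
  calc ∑ p, (Qpoly N lam (jj p)).totalDegree ≤ ∑ p, (jj p + 1) :=
        Finset.sum_le_sum fun p _ => td_Q N lam (jj p)
    _ = k + m := by rw [Finset.sum_add_distrib, hsum]; simp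

theorem stmt_12 (N : ℕ) (hN : 2 ≤ N) (lam : Fin N → ℝ) (hlam : ∀ ν, 0 < lam ν)
    (hsum : ∑ ν, lam ν = 1) (k : ℕ) (hk : 1 ≤ k) :
    (Vpoly N lam k).totalDegree ≤ 2 * k ∧
      (Vpoly N lam k -
          MvPolynomial.C ((2 ^ k * (Nat.factorial k : ℂ))⁻¹) *
            ((∑ ν, (X ν : MvPolynomial (Fin N) ℂ)) ^ 2 -
              ∑ ν, MvPolynomial.C ((lam ν : ℂ))⁻¹ * X ν ^ 2) ^ k).totalDegree ≤
        2 * k - 1 := by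
  set W : MvPolynomial (Fin N) ℂ :=
    (∑ ν, (X ν : MvPolynomial (Fin N) ℂ)) ^ 2 - ∑ ν, MvPolynomial.C ((lam ν : ℂ))⁻¹ * X ν ^ 2
    with hW
  set L : MvPolynomial (Fin N) ℂ := C (2⁻¹:ℂ) * W with hL
  have hWd : W.totalDegree ≤ 2 := by
    refine (totalDegree_sub _ _).trans (max_le ?_ ?_)
    · exact (totalDegree_pow _ _).trans (by have := td_S (N := N); omega)
    · refine totalDegree_finsetSum_le fun ν _ => ?_
      refine (totalDegree_mul _ _).trans ?_
      rw [totalDegree_C, zero_add, totalDegree_X_pow]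
  have hLd : L.totalDegree ≤ 2 := by
    refine (totalDegree_mul _ _).trans ?_
    rw [totalDegree_C, zero_add]; exact hWd
  have hQ1L : (Qpoly N lam 1 - L).totalDegree ≤ 1 := td_Q1_sub N lam
  constructor
  · refine totalDegree_finsetSum_le fun m hm => ?_
    have hm' : m ≤ k := (Finset.mem_Icc.mp hm).2
    exact (td_term N lam k m).trans (by omega)
  · obtain ⟨n, rfl⟩ : ∃ n, k = n + 1 := ⟨k - 1, by omega⟩
    set k := n + 1
    -- split off top term
    have hsplit : Vpoly N lam k =
        (∑ m ∈ Finset.Icc 1 n, MvPolynomial.C ((Nat.factorial m : ℂ))⁻¹ *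
          ∑ jj ∈ (Finset.Nat.antidiagonalTuple m k).filter (fun jj => ∀ p, 1 ≤ jj p),
            ∏ p, Qpoly N lam (jj p)) +
          C ((Nat.factorial k : ℂ))⁻¹ * Qpoly N lam 1 ^ k := by
      rw [Vpoly, Finset.sum_Icc_succ_top (by omega)]
      congr 1
      rw [anti_filter k, Finset.sum_singleton, Finset.prod_const, Finset.card_univ,
        Fintype.card_fin]
    have hCL : C ((Nat.factorial k : ℂ))⁻¹ * L ^ k =
        C ((2 ^ k * (Nat.factorial k : ℂ))⁻¹) * W ^ k := by
      rw [hL, mul_pow, ← map_pow, ← mul_assoc, ← map_mul]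
      congr 2
      rw [inv_pow, ← mul_inv, mul_comm]
    have hkey : Vpoly N lam k - C ((2 ^ k * (Nat.factorial k : ℂ))⁻¹) * W ^ k =
        (∑ m ∈ Finset.Icc 1 n, MvPolynomial.C ((Nat.factorial m : ℂ))⁻¹ *
          ∑ jj ∈ (Finset.Nat.antidiagonalTuple m k).filter (fun jj => ∀ p, 1 ≤ jj p),
            ∏ p, Qpoly N lam (jj p)) +
          C ((Nat.factorial k : ℂ))⁻¹ *
            ((∑ i ∈ Finset.range k, Qpoly N lam 1 ^ i * L ^ (k - 1 - i)) *
              (Qpoly N lam 1 - L)) := by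
      rw [hsplit, ← hCL, geom_sum₂_mul]
      ring
    rw [hkey]
    refine (totalDegree_add _ _).trans (max_le ?_ ?_)
    · refine totalDegree_finsetSum_le fun m hm => ?_
      have hm' : m ≤ n := (Finset.mem_Icc.mp hm).2
      refine (td_term N lam k m).trans (by omega)
    · refine (totalDegree_mul _ _).trans ?_
      rw [totalDegree_C, zero_add]
      refine (totalDegree_mul _ _).trans ?_
      have h1 : (∑ i ∈ Finset.range k,
          Qpoly N lam 1 ^ i * L ^ (k - 1 - i)).totalDegree ≤ 2 * n := by
        refine totalDegree_finsetSum_le fun i hi => ?_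
        have hi' : i < k := Finset.mem_range.mp hi
        refine (totalDegree_mul _ _).trans ?_
        have h2 : (Qpoly N lam 1 ^ i).totalDegree ≤ 2 * i :=
          (totalDegree_pow _ _).trans (by have := td_Q N lam 1; nlinarith)
        have h3 : (L ^ (k - 1 - i)).totalDegree ≤ 2 * (k - 1 - i) :=
          (totalDegree_pow _ _).trans (by nlinarith)
        omega
      omega
end
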